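/- arXiv:1310.2760 — 2 statements merged into one kernel-verified Lean document; each statement's English description precedes it below -/
import Mathlib

section
/- Let k be a circle with center O and radius R and ω a circle with center I and radius r in the Euclidean plane ℝ², with ω strictly inside k (dist(O,I) + r < R). Then the following are equivalent: (i) there exist a line t tangent to ω and a t-pair (ω₁, ω₂) such that ω, ω₁, ω₂ have two distinct common external tangent lines; (ii) dist(O,I)² = (R − r)² − 4r². -/
open RealInnerProductSpace

noncomputable section

/-- The Euclidean plane. -/
abbrev Pt := EuclideanSpace ℝ (Fin 2)

/-- `L` is a line in the plane. -/
def IsLine (L : Set Pt) : Prop :=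
  ∃ P v : Pt, v ≠ 0 ∧ L = {X | ∃ t : ℝ, X = P + t • v}

/-- The line `L` is tangent to the circle with center `P` and radius `ρ`:
the distance from `P` to `L` equals `ρ`. -/
def TangentTo (L : Set Pt) (P : Pt) (ρ : ℝ) : Prop := Metric.infDist P L = ρ

/-- All points of `S` lie strictly on the same side of the line `L`: there is a unit
normal `u` of `L` and a point `X₀ ∈ L` such that all signed distances `⟪X - X₀, u⟫`
for `X ∈ S` are strictly positive (choosing `-u` covers the other sign). -/
def StrictSameSide (L : Set Pt) (S : Set Pt) : Prop :=
  ∃ u X₀ : Pt, ‖u‖ = 1 ∧ X₀ ∈ L ∧ (∀ X ∈ L, ∀ Y ∈ L, ⟪X - Y, u⟫ = 0) ∧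
    ∀ P ∈ S, 0 < ⟪P - X₀, u⟫

/-- `L` is a common external tangent of the three circles `c₁, c₂, c₃`
(each given as a pair (center, radius)). -/
def IsCommonExternalTangent (L : Set Pt) (c₁ c₂ c₃ : Pt × ℝ) : Prop :=
  IsLine L ∧ TangentTo L c₁.1 c₁.2 ∧ TangentTo L c₂.1 c₂.2 ∧ TangentTo L c₃.1 c₃.2 ∧
    StrictSameSide L {c₁.1, c₂.1, c₃.1}

/-- Given the outer circle `(O, R)`, the inner circle `(I, r)` and a line `t` tangent to the
inner circle, `(c₁, c₂)` is a `t`-pair: two distinct circles, each externally tangent to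
`(I, r)`, internally tangent to `(O, R)`, tangent to `t`, with center strictly on the same
side of `t` as `I`. -/
def TPair (O : Pt) (R : ℝ) (I : Pt) (r : ℝ) (t : Set Pt) (c₁ c₂ : Pt × ℝ) : Prop :=
  c₁ ≠ c₂ ∧ 0 < c₁.2 ∧ 0 < c₂.2 ∧
  dist c₁.1 I = c₁.2 + r ∧ dist c₁.1 O = R - c₁.2 ∧
  dist c₂.1 I = c₂.2 + r ∧ dist c₂.1 O = R - c₂.2 ∧
  TangentTo t c₁.1 c₁.2 ∧ TangentTo t c₂.1 c₂.2 ∧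
  StrictSameSide t {I, c₁.1, c₂.1}

/-!
Measure heights above the tangent line `t` and abscissae along it. A circle of radius `ρ` that
touches `t` and is externally tangent to `ω` has its center at height `ρ` and abscissa `x`
relative to `I` with `x² = 4rρ`. Two distinct common external tangents of `ω, ω₁, ω₂` make the
three centers collinear, which together with `xᵢ² = 4rrᵢ` forces `x₁x₂ = -4r²`. Internal
tangency to `k` says that `x₁` and `x₂` are the two roots of one quadratic, and Vieta's formulas
turn `x₁x₂ = -4r²` into `OI² = (R - r)² - 4r²`. Conversely, if `OI² = (R - r)² - 4r²`, the circles
of radius `r` centered at `I ± 2r v`, with `v` a unit vector orthogonal to `OI`, are tangent to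
`k`, and the two tangents of `ω` parallel to `v` are common external tangents of all three.
-/

open Module

instance : Fact (finrank ℝ Pt = 2) := ⟨finrank_euclideanSpace_fin⟩

section InnerProductSpace

variable {E : Type*} [NormedAddCommGroup E] [InnerProductSpace ℝ E]

theorem infDist_setOf_inner_eq {n : E} (hn : ‖n‖ = 1) (c : ℝ) (P : E) :
    Metric.infDist P {X | ⟪X, n⟫ = c} = |⟪P, n⟫ - c| := by
  have hfoot : P - (⟪P, n⟫ - c) • n ∈ {X : E | ⟪X, n⟫ = c} := by
    simp [inner_sub_left, real_inner_smul_left, hn]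
  apply le_antisymm
  · refine (Metric.infDist_le_dist_of_mem hfoot).trans_eq ?_
    rw [dist_eq_norm, sub_sub_cancel, norm_smul, hn, mul_one, Real.norm_eq_abs]
  · refine (Metric.le_infDist ⟨_, hfoot⟩).2 fun X (hX : ⟪X, n⟫ = c) => ?_
    calc |⟪P, n⟫ - c| = |⟪P - X, n⟫| := by rw [inner_sub_left, hX]
      _ ≤ ‖P - X‖ * ‖n‖ := abs_real_inner_le_norm _ _
      _ = dist P X := by rw [hn, mul_one, dist_eq_norm]

theorem dist_add_smul_sq_of_inner_eq_zero {v : E} (hv : ‖v‖ = 1) {P Q : E} (h : ⟪Q - P, v⟫ = 0)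
    (s : ℝ) : dist (P + s • v) Q ^ 2 = s ^ 2 + dist Q P ^ 2 := by
  rw [dist_eq_norm, dist_eq_norm, show P + s • v - Q = s • v - (Q - P) by abel, norm_sub_sq_real,
    real_inner_smul_left, real_inner_comm, h, norm_smul, hv, mul_one, Real.norm_eq_abs, sq_abs]
  ring

variable [Fact (finrank ℝ E = 2)]

theorem exists_norm_eq_one_inner_eq_zero (z : E) : ∃ v : E, ‖v‖ = 1 ∧ ⟪z, v⟫ = 0 := by
  have : FiniteDimensional ℝ E := .of_fact_finrank_eq_two
  let o : Orientation ℝ E (Fin 2) := (finBasisOfFinrankEq ℝ E Fact.out).orientation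
  rcases eq_or_ne z 0 with rfl | hz
  · have : Nontrivial E := Module.nontrivial_of_finrank_eq_succ (Fact.out : finrank ℝ E = 2)
    obtain ⟨v, hv⟩ := exists_norm_eq E zero_le_one
    exact ⟨v, hv, inner_zero_left _⟩
  · refine ⟨‖z‖⁻¹ • o.rightAngleRotation z, ?_, ?_⟩
    · rw [norm_smul, LinearIsometryEquiv.norm_map, norm_inv, norm_norm,
        inv_mul_cancel₀ (norm_ne_zero_iff.2 hz)]
    · rw [real_inner_smul_right, o.inner_rightAngleRotation_right, o.areaForm_apply_self,
        neg_zero, mul_zero]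

theorem setOf_add_smul_eq_setOf_inner {n w : E} (hn : n ≠ 0) (hw : w ≠ 0) (hwn : ⟪n, w⟫ = 0)
    (P : E) : {X | ∃ s : ℝ, X = P + s • w} = {X | ⟪X, n⟫ = ⟪P, n⟫} := by
  ext X
  constructor
  · rintro ⟨s, rfl⟩
    rw [Set.mem_ofPred_eq, inner_add_left, real_inner_smul_left, real_inner_comm n w, hwn,
      mul_zero, add_zero]
  · intro (hX : ⟪X, n⟫ = ⟪P, n⟫)
    have hXP : ⟪n, X - P⟫ = 0 := by rw [real_inner_comm, inner_sub_left, hX, sub_self]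
    obtain ⟨s, hs⟩ := Submodule.mem_span_singleton.1
      (Submodule.mem_span_singleton_of_inner_eq_zero_of_inner_eq_zero hn hw hXP hwn)
    exact ⟨s, by rw [hs, add_sub_cancel]⟩

namespace Orientation

variable (o : Orientation ℝ E (Fin 2))

theorem areaForm_eq_zero_of_inner_eq_zero {m a b : E} (hm : m ≠ 0) (ha : ⟪a, m⟫ = 0)
    (hb : ⟪b, m⟫ = 0) : o.areaForm a b = 0 := by
  have h := o.inner_mul_areaForm_sub m a b
  rw [real_inner_comm, ha, real_inner_comm, hb, zero_mul, mul_zero, sub_zero] at h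
  exact (mul_eq_zero.1 h.symm).resolve_left (by positivity)

theorem dist_sq_eq_inner_sub_sq_add_areaForm_sub_sq {n : E} (hn : ‖n‖ = 1) (P Q : E) :
    dist P Q ^ 2 = (⟪P, n⟫ - ⟪Q, n⟫) ^ 2 + (o.areaForm n P - o.areaForm n Q) ^ 2 := by
  have h := o.inner_sq_add_areaForm_sq n (P - Q)
  rw [hn, one_pow, one_mul, real_inner_comm, inner_sub_left, map_sub] at h
  rw [dist_eq_norm, ← h]

end Orientation

end InnerProductSpace

theorem IsLine.exists_eq_setOf_inner {L S : Set Pt} (hL : IsLine L) (hS : StrictSameSide L S) :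
    ∃ (n : Pt) (c : ℝ), ‖n‖ = 1 ∧ L = {X | ⟪X, n⟫ = c} ∧ ∀ P ∈ S, c < ⟪P, n⟫ := by
  obtain ⟨P, w, hw, rfl⟩ := hL
  obtain ⟨n, X₀, hn, hX₀, hperp, hpos⟩ := hS
  have hwn : ⟪n, w⟫ = 0 := by
    simpa [real_inner_comm] using hperp (P + (1 : ℝ) • w) ⟨1, rfl⟩ P ⟨0, by simp⟩
  rw [setOf_add_smul_eq_setOf_inner (norm_ne_zero_iff.1 (hn ▸ one_ne_zero)) hw hwn] at hX₀ ⊢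
  refine ⟨n, ⟪P, n⟫, hn, rfl, fun Q hQ => ?_⟩
  have hQ := hpos Q hQ
  rw [inner_sub_left, hX₀] at hQ
  linarith

theorem isLine_setOf_inner {n : Pt} (hn : ‖n‖ = 1) (c : ℝ) : IsLine {X | ⟪X, n⟫ = c} := by
  obtain ⟨w, hw, hnw⟩ := exists_norm_eq_one_inner_eq_zero n
  have hcn : ⟪c • n, n⟫ = c := by simp [real_inner_smul_left, hn]
  refine ⟨c • n, w, norm_ne_zero_iff.1 (hw ▸ one_ne_zero), ?_⟩
  rw [setOf_add_smul_eq_setOf_inner (norm_ne_zero_iff.1 (hn ▸ one_ne_zero))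
    (norm_ne_zero_iff.1 (hw ▸ one_ne_zero)) hnw, hcn]

theorem isCommonExternalTangent_iff {L : Set Pt} {P₁ P₂ P₃ : Pt} {ρ₁ ρ₂ ρ₃ : ℝ} :
    IsCommonExternalTangent L (P₁, ρ₁) (P₂, ρ₂) (P₃, ρ₃) ↔
      ∃ (n : Pt) (c : ℝ), ‖n‖ = 1 ∧ L = {X | ⟪X, n⟫ = c} ∧ 0 < ρ₁ ∧ 0 < ρ₂ ∧ 0 < ρ₃ ∧
        ⟪P₁, n⟫ = c + ρ₁ ∧ ⟪P₂, n⟫ = c + ρ₂ ∧ ⟪P₃, n⟫ = c + ρ₃ := by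
  constructor
  · rintro ⟨hL, h₁, h₂, h₃, hS⟩
    obtain ⟨n, c, hn, rfl, hpos⟩ := hL.exists_eq_setOf_inner hS
    simp only [TangentTo, infDist_setOf_inner_eq hn] at h₁ h₂ h₃
    have k₁ := hpos P₁ (by simp)
    have k₂ := hpos P₂ (by simp)
    have k₃ := hpos P₃ (by simp)
    rw [abs_of_pos (sub_pos.2 k₁)] at h₁
    rw [abs_of_pos (sub_pos.2 k₂)] at h₂
    rw [abs_of_pos (sub_pos.2 k₃)] at h₃
    exact ⟨n, c, hn, rfl, by linarith, by linarith, by linarith, by linarith, by linarith,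
      by linarith⟩
  · rintro ⟨n, c, hn, rfl, hρ₁, hρ₂, hρ₃, h₁, h₂, h₃⟩
    have hcn : ⟪c • n, n⟫ = c := by simp [real_inner_smul_left, hn]
    refine ⟨isLine_setOf_inner hn c, ?_, ?_, ?_, n, c • n, hn, hcn, ?_, ?_⟩
    · simp [TangentTo, infDist_setOf_inner_eq hn, h₁, abs_of_pos hρ₁]
    · simp [TangentTo, infDist_setOf_inner_eq hn, h₂, abs_of_pos hρ₂]
    · simp [TangentTo, infDist_setOf_inner_eq hn, h₃, abs_of_pos hρ₃]
    · intro X (hX : ⟪X, n⟫ = c) Y (hY : ⟪Y, n⟫ = c)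
      rw [inner_sub_left, hX, hY, sub_self]
    · rintro P (rfl | rfl | rfl) <;> rw [inner_sub_left, hcn] <;> linarith

theorem TPair.isCommonExternalTangent {O I : Pt} {R r : ℝ} {t : Set Pt} {c₁ c₂ : Pt × ℝ}
    (h : TPair O R I r t c₁ c₂) (ht : IsLine t) (htI : TangentTo t I r) :
    IsCommonExternalTangent t (I, r) c₁ c₂ := by
  obtain ⟨-, -, -, -, -, -, -, h₁, h₂, hS⟩ := h
  exact ⟨ht, htI, h₁, h₂, hS⟩

theorem IsCommonExternalTangent.areaForm_sub_eq_zero (o : Orientation ℝ Pt (Fin 2))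
    {L₁ L₂ : Set Pt} {P₁ P₂ P₃ : Pt} {ρ₁ ρ₂ ρ₃ : ℝ}
    (h₁ : IsCommonExternalTangent L₁ (P₁, ρ₁) (P₂, ρ₂) (P₃, ρ₃))
    (h₂ : IsCommonExternalTangent L₂ (P₁, ρ₁) (P₂, ρ₂) (P₃, ρ₃)) (hne : L₁ ≠ L₂) :
    o.areaForm (P₂ - P₁) (P₃ - P₁) = 0 := by
  obtain ⟨n₁, c₁, -, rfl, -, -, -, h₁₁, h₁₂, h₁₃⟩ := isCommonExternalTangent_iff.1 h₁
  obtain ⟨n₂, c₂, -, rfl, -, -, -, h₂₁, h₂₂, h₂₃⟩ := isCommonExternalTangent_iff.1 h₂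
  have hn : n₁ - n₂ ≠ 0 := by
    rw [sub_ne_zero]
    rintro rfl
    exact hne (by rw [show c₁ = c₂ by linarith])
  refine o.areaForm_eq_zero_of_inner_eq_zero hn ?_ ?_ <;>
    simp only [inner_sub_left, inner_sub_right] <;> linarith

theorem sq_add_sq_eq_of_tangent_coords {r R q p r₁ r₂ x₁ x₂ : ℝ} (hr : r ≠ 0)
    (hne : x₁ ≠ x₂ ∨ r₁ ≠ r₂)
    (hω₁ : (r₁ - r) ^ 2 + x₁ ^ 2 = (r₁ + r) ^ 2) (hω₂ : (r₂ - r) ^ 2 + x₂ ^ 2 = (r₂ + r) ^ 2)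
    (hk₁ : (r₁ - q) ^ 2 + (x₁ - p) ^ 2 = (R - r₁) ^ 2)
    (hk₂ : (r₂ - q) ^ 2 + (x₂ - p) ^ 2 = (R - r₂) ^ 2)
    (hcol : (r₁ - r) * x₂ = x₁ * (r₂ - r)) :
    (q - r) ^ 2 + p ^ 2 = (R - r) ^ 2 - 4 * r ^ 2 := by
  have hx : x₁ ≠ x₂ := by
    rintro rfl
    refine hne.resolve_left (not_not.2 rfl) (mul_left_cancel₀ (by positivity : 4 * r ≠ 0) ?_)
    linear_combination hω₂ - hω₁
  have hprod : x₁ * x₂ = -(4 * r ^ 2) := by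
    refine mul_left_cancel₀ (sub_ne_zero.2 hx) ?_
    linear_combination 4 * r * hcol + x₂ * hω₁ - x₁ * hω₂
  have hsum : (R - q + 2 * r) * (x₁ + x₂) = 4 * r * p := by
    refine mul_left_cancel₀ (sub_ne_zero.2 hx) ?_
    linear_combination 2 * r * (hk₁ - hk₂) + (R - q) * (hω₁ - hω₂)
  refine mul_left_cancel₀ (by positivity : 2 * r ≠ 0) ?_
  linear_combination 2 * r * hk₁ + (R - q) * hω₁ - x₁ * hsum + (R - q + 2 * r) * hprod

theorem dist_sq_eq_of_tPair {O I : Pt} {R r : ℝ} (hr : r ≠ 0) {t : Set Pt} (ht : IsLine t)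
    (htI : TangentTo t I r) {c₁ c₂ : Pt × ℝ} (hpair : TPair O R I r t c₁ c₂) {L₁ L₂ : Set Pt}
    (hL : L₁ ≠ L₂) (h₁ : IsCommonExternalTangent L₁ (I, r) c₁ c₂)
    (h₂ : IsCommonExternalTangent L₂ (I, r) c₁ c₂) :
    dist O I ^ 2 = (R - r) ^ 2 - 4 * r ^ 2 := by
  obtain ⟨J₁, r₁⟩ := c₁
  obtain ⟨J₂, r₂⟩ := c₂
  let o : Orientation ℝ Pt (Fin 2) := (EuclideanSpace.basisFun (Fin 2) ℝ).toBasis.orientation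
  have hcol := h₁.areaForm_sub_eq_zero o h₂ hL
  obtain ⟨n, c, hn, rfl, -, -, -, hI, hJ₁, hJ₂⟩ :=
    isCommonExternalTangent_iff.1 (hpair.isCommonExternalTangent ht htI)
  obtain ⟨hne, -, -, hJ₁I, hJ₁O, hJ₂I, hJ₂O, -⟩ := hpair
  dsimp only at hne hJ₁I hJ₁O hJ₂I hJ₂O
  -- `⟪X, n⟫` and `a X` are the height and the abscissa of `X` in the frame of `t`.
  have hdist := o.dist_sq_eq_inner_sub_sq_add_areaForm_sub_sq hn
  set a := o.areaForm n
  have hframe := o.inner_mul_areaForm_sub n (J₁ - I) (J₂ - I)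
  rw [hcol, mul_zero, inner_sub_right, inner_sub_right, real_inner_comm J₁, real_inner_comm J₂,
    real_inner_comm I, hI, hJ₁, hJ₂, map_sub, map_sub] at hframe
  have hω₁ : (r₁ - r) ^ 2 + (a J₁ - a I) ^ 2 = (r₁ + r) ^ 2 := by
    rw [← hJ₁I, hdist, hJ₁, hI]; ring
  have hω₂ : (r₂ - r) ^ 2 + (a J₂ - a I) ^ 2 = (r₂ + r) ^ 2 := by
    rw [← hJ₂I, hdist, hJ₂, hI]; ring
  have hk₁ : (r₁ - (⟪O, n⟫ - c)) ^ 2 + ((a J₁ - a I) - (a O - a I)) ^ 2 = (R - r₁) ^ 2 := by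
    rw [← hJ₁O, hdist, hJ₁]; ring
  have hk₂ : (r₂ - (⟪O, n⟫ - c)) ^ 2 + ((a J₂ - a I) - (a O - a I)) ^ 2 = (R - r₂) ^ 2 := by
    rw [← hJ₂O, hdist, hJ₂]; ring
  have hne' : a J₁ - a I ≠ a J₂ - a I ∨ r₁ ≠ r₂ := by
    by_contra! h
    refine hne (Prod.ext (dist_eq_zero.1 (pow_eq_zero_iff two_ne_zero |>.1 ?_)) h.2)
    rw [hdist, hJ₁, hJ₂, h.2]
    linear_combination (a J₁ - a J₂) * h.1
  have key := sq_add_sq_eq_of_tangent_coords hr hne' hω₁ hω₂ hk₁ hk₂ (by linear_combination hframe)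
  rw [hdist, hI]
  linear_combination key

theorem exists_tPair_of_dist_sq_eq {O I : Pt} {R r : ℝ} (hr : 0 < r) (hrR : r ≤ R)
    (h : dist O I ^ 2 = (R - r) ^ 2 - 4 * r ^ 2) :
    ∃ t : Set Pt, IsLine t ∧ TangentTo t I r ∧
      ∃ c₁ c₂ : Pt × ℝ, TPair O R I r t c₁ c₂ ∧
        ∃ u₁ u₂ : Set Pt, u₁ ≠ u₂ ∧
          IsCommonExternalTangent u₁ (I, r) c₁ c₂ ∧ IsCommonExternalTangent u₂ (I, r) c₁ c₂ := by
  obtain ⟨v, hv, hOv⟩ := exists_norm_eq_one_inner_eq_zero (O - I)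
  obtain ⟨n, hn, hvn⟩ := exists_norm_eq_one_inner_eq_zero v
  have hheight (s : ℝ) : ⟪I + s • v, n⟫ = ⟪I, n⟫ := by
    rw [inner_add_left, real_inner_smul_left, hvn, mul_zero, add_zero]
  have hω (s : ℝ) : dist (I + s • v) I = |s| := by
    rw [dist_self_add_left, norm_smul, hv, mul_one, Real.norm_eq_abs]
  have hk {s : ℝ} (hs : s ^ 2 = 4 * r ^ 2) : dist (I + s • v) O = R - r := by
    refine (sq_eq_sq₀ dist_nonneg (sub_nonneg.2 hrR)).1 ?_
    rw [dist_add_smul_sq_of_inner_eq_zero hv hOv, hs, h]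
    ring
  set J₁ := I + (2 * r) • v
  set J₂ := I + (-(2 * r)) • v
  have ht₁ : IsCommonExternalTangent {X | ⟪X, n⟫ = ⟪I, n⟫ - r} (I, r) (J₁, r) (J₂, r) :=
    isCommonExternalTangent_iff.2 ⟨n, _, hn, rfl, hr, hr, hr, by ring, by rw [hheight]; ring,
      by rw [hheight]; ring⟩
  have ht₂ : IsCommonExternalTangent {X | ⟪X, -n⟫ = -⟪I, n⟫ - r} (I, r) (J₁, r) (J₂, r) :=
    isCommonExternalTangent_iff.2 ⟨-n, _, by rw [norm_neg, hn], rfl, hr, hr, hr,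
      by rw [inner_neg_right]; ring, by rw [inner_neg_right, hheight]; ring,
      by rw [inner_neg_right, hheight]; ring⟩
  have hJ : (J₁, r) ≠ (J₂, r) := by
    intro heq
    have hv' := congrArg (fun c : Pt × ℝ => ⟪c.1 - I, v⟫) heq
    simp only [J₁, J₂, add_sub_cancel_left, real_inner_smul_left, real_inner_self_eq_norm_sq,
      hv] at hv'
    linarith
  have ht : {X | ⟪X, n⟫ = ⟪I, n⟫ - r} ≠ {X | ⟪X, -n⟫ = -⟪I, n⟫ - r} := by
    intro heq
    have hIn : ⟪I + r • n, n⟫ = ⟪I, n⟫ + r := by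
      rw [inner_add_left, real_inner_smul_left, real_inner_self_eq_norm_sq, hn, one_pow, mul_one]
    have hmem : I + r • n ∈ {X | ⟪X, -n⟫ = -⟪I, n⟫ - r} := by
      rw [Set.mem_ofPred_eq, inner_neg_right, hIn, neg_add']
    rw [← heq, Set.mem_ofPred_eq, hIn] at hmem
    linarith
  refine ⟨_, ht₁.1, ht₁.2.1, _, _, ⟨hJ, hr, hr, ?_, hk (by ring), ?_, hk (by ring),
    ht₁.2.2.1, ht₁.2.2.2.1, ht₁.2.2.2.2⟩, _, _, ht, ht₁, ht₂⟩
  · rw [hω, abs_of_pos (by positivity)]; ring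
  · rw [hω, abs_neg, abs_of_pos (by positivity)]; ring

theorem sangaku_euler_characterization_general
    (O I : Pt) (R r : ℝ) (hr : 0 < r)
    (hinside : dist O I + r < R) :
    (∃ t : Set Pt, IsLine t ∧ TangentTo t I r ∧
      ∃ c₁ c₂ : Pt × ℝ, TPair O R I r t c₁ c₂ ∧
        ∃ u₁ u₂ : Set Pt, u₁ ≠ u₂ ∧
          IsCommonExternalTangent u₁ (I, r) c₁ c₂ ∧
          IsCommonExternalTangent u₂ (I, r) c₁ c₂) ↔
    dist O I ^ 2 = (R - r) ^ 2 - 4 * r ^ 2 := by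
  constructor
  · rintro ⟨t, ht, htI, c₁, c₂, hpair, u₁, u₂, hne, h₁, h₂⟩
    exact dist_sq_eq_of_tPair hr.ne' ht htI hpair hne h₁ h₂
  · exact exists_tPair_of_dist_sq_eq hr (by linarith [dist_nonneg (x := O) (y := I)])

/-- **Euler-type characterization.** The circles `ω, ω₁, ω₂` of some `t`-pair have two
distinct common external tangents for some tangent line `t` of `ω` if and only if
`dist O I ^ 2 = (R - r) ^ 2 - 4 r ^ 2`. -/
theorem sangaku_euler_characterization
    (O I : Pt) (R r : ℝ) (hr : 0 < r) (hR : 0 < R)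
    (hinside : dist O I + r < R) :
    (∃ t : Set Pt, IsLine t ∧ TangentTo t I r ∧
      ∃ c₁ c₂ : Pt × ℝ, TPair O R I r t c₁ c₂ ∧
        ∃ u₁ u₂ : Set Pt, u₁ ≠ u₂ ∧
          IsCommonExternalTangent u₁ (I, r) c₁ c₂ ∧
          IsCommonExternalTangent u₂ (I, r) c₁ c₂) ↔
    dist O I ^ 2 = (R - r) ^ 2 - 4 * r ^ 2 :=
  sangaku_euler_characterization_general O I R r hr hinside
end
end

section
/- Let k be a circle with center O and radius R and ω a circle with center I and radius r in the Euclidean plane ℝ², with ω strictly inside k (dist(O,I) + r < R), O ≠ I, and dist(O,I)² = (R − r)² − 4r². Then there exists a fixed line ℓ in ℝ² with the following property: for every line t tangent to ω, every t-pair (ω₁, ω₂), and every second common external tangent u ≠ t of the three circles ω, ω₁, ω₂, if t and u intersect, then their intersection point lies on ℓ. -/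
/-!
The intersection point `X` of two common tangents of `ω` and `ω₁`, with both centers on the same
side of each, is the center of the homothety of ratio `r₁ / r` mapping `ω` to `ω₁`. The difference
of powers `p Y = (|YO|² - R²) - (|YI|² - r²)` is affine in `Y`, so
`p J₁ = (1 - r₁ / r) p X + (r₁ / r) p I`. The tangencies of `ω₁` with `ω` and `k` give
`p J₁ = -2 r₁ (R + r)`, and the hypothesis on `|OI|` says precisely that `p I = -2 r (R + r)`.
As `J₁ ≠ I`, the ratio is not `1`, hence `p X = 0`: `X` lies on the radical axis of `k` and `ω`.
-/

open RealInnerProductSpace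

noncomputable section

open Module

section InnerProductSpace

variable {E : Type*} [NormedAddCommGroup E] [InnerProductSpace ℝ E]

theorem infDist_setOf_inner_sub_eq_zero {n : E} (hn : ‖n‖ = 1) (Q X₀ : E) :
    Metric.infDist Q {Y | ⟪Y - X₀, n⟫ = 0} = |⟪Q - X₀, n⟫| := by
  set c := ⟪Q - X₀, n⟫
  have hfoot : Q - c • n ∈ {Y | ⟪Y - X₀, n⟫ = 0} := by
    have hnn : ⟪n, n⟫ = 1 := by rw [real_inner_self_eq_norm_sq, hn, one_pow]
    simp only [Set.mem_ofPred_eq, inner_sub_left, real_inner_smul_left, hnn, c]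
    ring
  refine le_antisymm ?_ ((Metric.le_infDist ⟨X₀, by simp⟩).2 fun Y (hY : ⟪Y - X₀, n⟫ = 0) => ?_)
  · calc Metric.infDist Q _ ≤ dist Q (Q - c • n) := Metric.infDist_le_dist_of_mem hfoot
      _ = |c| := by rw [dist_eq_norm, sub_sub_cancel, norm_smul, hn, mul_one, Real.norm_eq_abs]
  · calc |c| = |⟪Q - Y, n⟫| := by
          rw [← sub_sub_sub_cancel_right Q Y X₀, inner_sub_left, hY, sub_zero]
      _ ≤ ‖Q - Y‖ * ‖n‖ := abs_real_inner_le_norm _ _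
      _ = dist Q Y := by rw [hn, mul_one, dist_eq_norm]

theorem dist_sq_sub_dist_sq_homothety (O I X A : E) (μ : ℝ) :
    dist (AffineMap.homothety X μ A) O ^ 2 - dist (AffineMap.homothety X μ A) I ^ 2 =
      (1 - μ) * (dist X O ^ 2 - dist X I ^ 2) + μ * (dist A O ^ 2 - dist A I ^ 2) := by
  have hlin (Y : E) : dist Y O ^ 2 - dist Y I ^ 2 = 2 * ⟪Y, I - O⟫ + (‖O‖ ^ 2 - ‖I‖ ^ 2) := by
    rw [dist_eq_norm, dist_eq_norm, norm_sub_sq_real, norm_sub_sq_real, inner_sub_right]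
    ring
  rw [hlin, hlin, hlin, AffineMap.homothety_apply, vsub_eq_sub, vadd_eq_add, inner_add_left,
    real_inner_smul_left, inner_sub_left]
  ring

theorem dist_sq_sub_sq_eq_of_homothety {O I J X : E} {R r ρ : ℝ} (hr : 0 < r)
    (hJI : dist J I = ρ + r) (hJO : dist J O = R - ρ)
    (hOI : dist O I ^ 2 = (R - r) ^ 2 - 4 * r ^ 2)
    (hJ : AffineMap.homothety X (ρ / r) I = J) :
    dist X O ^ 2 - R ^ 2 = dist X I ^ 2 - r ^ 2 := by
  set μ := ρ / r
  have hρ : ρ = μ * r := (div_mul_cancel₀ ρ hr.ne').symm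
  have hμ : 1 - μ ≠ 0 := by
    intro h
    rw [← sub_eq_zero.mp h, AffineMap.homothety_one] at hJ
    rw [← hJ, AffineMap.id_apply, dist_self, hρ, ← sub_eq_zero.mp h] at hJI
    linarith
  have key := dist_sq_sub_dist_sq_homothety O I X I μ
  rw [hJ, hJI, hJO, dist_self, dist_comm I O, hOI, hρ] at key
  refine sub_eq_zero.mp <| (mul_eq_zero.mp ?_).resolve_left hμ
  linear_combination -key

section TwoDim

variable [Fact (finrank ℝ E = 2)]

theorem exists_ne_zero_inner_eq_zero {n : E} (hn : n ≠ 0) : ∃ v : E, v ≠ 0 ∧ ⟪v, n⟫ = 0 := by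
  have hrank := Submodule.finrank_orthogonal_span_singleton (𝕜 := ℝ) (n := 1) hn
  obtain ⟨v, hv, hv0⟩ := Submodule.exists_mem_ne_zero_of_ne_bot (p := (ℝ ∙ n)ᗮ) <| by
    rintro h
    rw [h, finrank_bot] at hrank
    exact zero_ne_one hrank
  exact ⟨v, hv0, Submodule.mem_orthogonal_singleton_iff_inner_left.mp hv⟩

theorem setOf_exists_add_smul_eq {P v n : E} (hv : v ≠ 0) (hn : n ≠ 0) (hvn : ⟪v, n⟫ = 0) :
    {X | ∃ s : ℝ, X = P + s • v} = {X | ⟪X - P, n⟫ = 0} := by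
  ext X
  constructor
  · rintro ⟨s, rfl⟩
    simp [real_inner_smul_left, hvn]
  · intro (hX : ⟪X - P, n⟫ = 0)
    obtain ⟨s, hs⟩ := Submodule.mem_span_singleton.mp <|
      Submodule.mem_span_singleton_of_inner_eq_zero_of_inner_eq_zero (𝕜 := ℝ) hn hv
        (by rwa [real_inner_comm]) (by rwa [real_inner_comm])
    exact ⟨s, by rw [hs, add_sub_cancel]⟩

theorem homothety_eq_of_inner_eq {n m X I J : E} {r ρ : ℝ} (hnm : n ≠ m) (hr : r ≠ 0)
    (hIn : ⟪I - X, n⟫ = r) (hIm : ⟪I - X, m⟫ = r) (hJn : ⟪J - X, n⟫ = ρ) (hJm : ⟪J - X, m⟫ = ρ) :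
    AffineMap.homothety X (ρ / r) I = J := by
  have hI : I - X ≠ 0 := by rintro h; rw [h, inner_zero_left] at hIn; exact hr hIn.symm
  obtain ⟨c, hc⟩ := Submodule.mem_span_singleton.mp <|
    Submodule.mem_span_singleton_of_inner_eq_zero_of_inner_eq_zero (𝕜 := ℝ) (sub_ne_zero.mpr hnm) hI
      (by rw [inner_sub_left, real_inner_comm, hJn, real_inner_comm, hJm, sub_self])
      (by rw [inner_sub_left, real_inner_comm, hIn, real_inner_comm, hIm, sub_self])
  have hρ : ρ / r = c := by
    rw [← hJn, ← hc, real_inner_smul_left, hIn, mul_div_cancel_right₀ _ hr]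
  rw [AffineMap.homothety_apply, vsub_eq_sub, vadd_eq_add, hρ, hc, sub_add_cancel]

end TwoDim

end InnerProductSpace

open scoped EuclideanSpace

theorem IsLine.eq_setOf_inner_sub_eq_zero {L : Set Pt} (hL : IsLine L) {n X : Pt} (hn : n ≠ 0)
    (hperp : ∀ Y ∈ L, ∀ Z ∈ L, ⟪Y - Z, n⟫ = 0) (hX : X ∈ L) : L = {Y | ⟪Y - X, n⟫ = 0} := by
  obtain ⟨P, v, hv, rfl⟩ := hL
  have hvn : ⟪v, n⟫ = 0 := by simpa using hperp (P + v) ⟨1, by simp⟩ P ⟨0, by simp⟩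
  rw [setOf_exists_add_smul_eq hv hn hvn] at hX ⊢
  ext Y
  change ⟪Y - P, n⟫ = 0 ↔ ⟪Y - X, n⟫ = 0
  rw [← sub_add_sub_cancel Y X P, inner_add_left, hX, add_zero]

theorem isLine_setOf_inner_eq {n : Pt} (hn : n ≠ 0) (c : ℝ) : IsLine {Y | ⟪Y, n⟫ = c} := by
  obtain ⟨v, hv, hvn⟩ := exists_ne_zero_inner_eq_zero hn
  refine ⟨(c / ‖n‖ ^ 2) • n, v, hv, ?_⟩
  have hn2 : ‖n‖ ^ 2 ≠ 0 := by positivity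
  rw [setOf_exists_add_smul_eq hv hn hvn]
  ext Y
  simp only [Set.mem_ofPred_eq, inner_sub_left, real_inner_smul_left, real_inner_self_eq_norm_sq,
    div_mul_cancel₀ _ hn2, sub_eq_zero]

theorem isLine_radicalAxis {O I : Pt} (hOI : O ≠ I) (R r : ℝ) :
    IsLine {X | dist X O ^ 2 - R ^ 2 = dist X I ^ 2 - r ^ 2} := by
  convert isLine_setOf_inner_eq (sub_ne_zero.mpr hOI.symm)
    ((‖I‖ ^ 2 - ‖O‖ ^ 2 + R ^ 2 - r ^ 2) / 2) using 1
  ext X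
  simp only [Set.mem_ofPred_eq, dist_eq_norm, norm_sub_sq_real, inner_sub_right]
  constructor <;> intro h <;> linarith

theorem IsLine.exists_normal_of_strictSameSide {L S : Set Pt} (hL : IsLine L)
    (hS : StrictSameSide L S) {X : Pt} (hX : X ∈ L) :
    ∃ n : Pt, L = {Y | ⟪Y - X, n⟫ = 0} ∧ ∀ P ∈ S, ∀ ρ, TangentTo L P ρ → ⟪P - X, n⟫ = ρ := by
  obtain ⟨n, X₀, hn, hX₀, hperp, hpos⟩ := hS
  have hLn := hL.eq_setOf_inner_sub_eq_zero (norm_ne_zero_iff.mp (hn ▸ one_ne_zero)) hperp hX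
  refine ⟨n, hLn, fun P hP ρ hρ => ?_⟩
  have hPn : 0 < ⟪P - X, n⟫ := by
    rw [← sub_add_sub_cancel P X₀ X, inner_add_left, hperp X₀ hX₀ X hX, add_zero]
    exact hpos P hP
  rwa [TangentTo, hLn, infDist_setOf_inner_sub_eq_zero hn, abs_of_pos hPn] at hρ

theorem intersection_of_tangents_on_fixed_line_general
    (O I : Pt) (R r : ℝ) (hr : 0 < r)
    (hOI : O ≠ I)
    (heuler : dist O I ^ 2 = (R - r) ^ 2 - 4 * r ^ 2) :
    ∃ ℓ : Set Pt, IsLine ℓ ∧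
      ∀ t : Set Pt, IsLine t → TangentTo t I r →
        ∀ c₁ c₂ : Pt × ℝ, TPair O R I r t c₁ c₂ →
          ∀ u : Set Pt, u ≠ t → IsCommonExternalTangent u (I, r) c₁ c₂ →
            ∀ X : Pt, X ∈ t → X ∈ u → X ∈ ℓ := by
  refine ⟨_, isLine_radicalAxis hOI R r, ?_⟩
  rintro t ht htI c₁ c₂ ⟨-, -, -, hJI, hJO, -, -, htJ, -, htside⟩ u hut
    ⟨hu, huI, huJ, -, huside⟩ X hXt hXu
  obtain ⟨n, rfl, htn⟩ := ht.exists_normal_of_strictSameSide htside hXt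
  obtain ⟨m, rfl, hum⟩ := hu.exists_normal_of_strictSameSide huside hXu
  have hnm : n ≠ m := by rintro rfl; exact hut rfl
  exact dist_sq_sub_sq_eq_of_homothety hr hJI hJO heuler <|
    homothety_eq_of_inner_eq hnm hr.ne' (htn I (by simp) r htI) (hum I (by simp) r huI)
      (htn c₁.1 (by simp) _ htJ) (hum c₁.1 (by simp) _ huJ)

/-- **Theorem 2.** If `ω` lies strictly inside `k`, `O ≠ I` and
`dist O I ^ 2 = (R - r) ^ 2 - 4 r ^ 2`, then there is a fixed line `ℓ` such that for every
tangent line `t` of `ω`, every `t`-pair `(ω₁, ω₂)` and every second common external tangent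
`u ≠ t` of `ω, ω₁, ω₂`, the intersection point of `t` and `u` (if any) lies on `ℓ`. -/
theorem intersection_of_tangents_on_fixed_line
    (O I : Pt) (R r : ℝ) (hr : 0 < r) (hR : 0 < R)
    (hinside : dist O I + r < R) (hOI : O ≠ I)
    (heuler : dist O I ^ 2 = (R - r) ^ 2 - 4 * r ^ 2) :
    ∃ ℓ : Set Pt, IsLine ℓ ∧
      ∀ t : Set Pt, IsLine t → TangentTo t I r →
        ∀ c₁ c₂ : Pt × ℝ, TPair O R I r t c₁ c₂ →
          ∀ u : Set Pt, u ≠ t → IsCommonExternalTangent u (I, r) c₁ c₂ →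
            ∀ X : Pt, X ∈ t → X ∈ u → X ∈ ℓ :=
  intersection_of_tangents_on_fixed_line_general O I R r hr hOI heuler
end
end
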